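/- Assume a delayed-reward MDP P̃ with episodic reward and an SDP P obtained by a higher-order Markov reward redistribution that is strictly return-equivalent to P̃, with expected redistributed rewards h_t = E_π[R_{t+1} | s_0,a_0,…,s_t,a_t] depending on the prefix. If the redistribution is optimal (κ(T−t−1,t) = 0 for all 0 ≤ t ≤ T−1) and the condition E_π[Σ_{τ=0}^{T−t−1} R_{t+2+τ} | s_t,a_t] = E_π[Σ_{τ=0}^{T−t−1} R_{t+2+τ} | s_0,a_0,…,s_t,a_t] holds for every prefix, then for every 0 ≤ t ≤ T the Q-function of P̃ decomposes as q̃^π(s_t,a_t) = Σ_{τ=0}^{t} h_τ. -/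

import Mathlib

namespace RR

/-- A trajectory (episode) of horizon `T`: state-action pairs at times `0, …, T`. -/
abbrev Traj (S A : Type) (T : ℕ) := Fin (T + 1) → S × A

variable {S A : Type} [Fintype S] [Fintype A] [DecidableEq S] [DecidableEq A] {T : ℕ}

/-- State-action pair of a trajectory at (clamped) natural time `t`. -/
def tAt (τ : Traj S A T) (t : ℕ) : S × A :=
  τ ⟨min t T, Nat.lt_succ_of_le (min_le_right t T)⟩

/-- Probability of a trajectory under initial distribution `μ0`, Markov transition
kernel `p` and Markov policy `π`. -/
noncomputable def trajProb (μ0 : S → ℝ) (p : S → A → S → ℝ) (π : S → A → ℝ)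
    (τ : Traj S A T) : ℝ :=
  μ0 (τ 0).1 * π (τ 0).1 (τ 0).2 *
    ∏ t : Fin T, (p (τ t.castSucc).1 (τ t.castSucc).2 (τ t.succ).1 *
      π (τ t.succ).1 (τ t.succ).2)

/-- Expectation of `f` over trajectories. -/
noncomputable def expec (μ0 : S → ℝ) (p : S → A → S → ℝ) (π : S → A → ℝ)
    (f : Traj S A T → ℝ) : ℝ :=
  ∑ τ : Traj S A T, trajProb μ0 p π τ * f τ

open scoped Classical in
/-- Probability of the event `E` over trajectories. -/
noncomputable def probOf (μ0 : S → ℝ) (p : S → A → S → ℝ) (π : S → A → ℝ)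
    (E : Traj S A T → Prop) : ℝ :=
  ∑ τ ∈ Finset.univ.filter E, trajProb μ0 p π τ

open scoped Classical in
/-- Conditional expectation of `f` given the event `E` (junk value `0` if `E` is null). -/
noncomputable def condExp (μ0 : S → ℝ) (p : S → A → S → ℝ) (π : S → A → ℝ)
    (f : Traj S A T → ℝ) (E : Traj S A T → Prop) : ℝ :=
  (∑ τ ∈ Finset.univ.filter E, trajProb μ0 p π τ * f τ) / probOf μ0 p π E

/-- `π` is a Markov policy (probability of action `a` given state `s`). -/
def IsPolicy (π : S → A → ℝ) : Prop :=
  (∀ s a, 0 ≤ π s a) ∧ ∀ s, ∑ a : A, π s a = 1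

/-- `p` is a Markov transition kernel. -/
def IsKernel (p : S → A → S → ℝ) : Prop :=
  (∀ s a s', 0 ≤ p s a s') ∧ ∀ s a, ∑ s' : S, p s a s' = 1

/-- `μ0` is an initial state distribution. -/
def IsInit (μ0 : S → ℝ) : Prop :=
  (∀ s, 0 ≤ μ0 s) ∧ ∑ s : S, μ0 s = 1

/-- The return `G_0` of an episode: `R τ t` is the reward `R_{t+1}` received at time `t`. -/
noncomputable def ret (R : Traj S A T → ℕ → ℝ) (τ : Traj S A T) : ℝ :=
  ∑ t ∈ Finset.range (T + 1), R τ t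

/-- A reward function is causal (an SDP reward): the reward at time `t` depends only on
the history `(s_0,a_0,…,s_t,a_t)`. -/
def Causal (R : Traj S A T → ℕ → ℝ) : Prop :=
  ∀ t ≤ T, ∀ τ τ' : Traj S A T, (∀ u ≤ t, tAt τ u = tAt τ' u) → R τ t = R τ' t

/-- The delayed (episodic) reward: the whole return `Rfin (s_T, a_T)` is given at the
final time step `T`, all other rewards are `0`. -/
noncomputable def delayedR (Rfin : S → A → ℝ) (τ : Traj S A T) (t : ℕ) : ℝ :=
  if t = T then Rfin (tAt τ T).1 (tAt τ T).2 else 0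

/-- The Q-function `q̃^π(s_t, a_t) = E_π[R̃_{T+1} ∣ s_t, a_t]` of the delayed-reward MDP. -/
noncomputable def qtil (T : ℕ) (μ0 : S → ℝ) (p : S → A → S → ℝ) (π : S → A → ℝ)
    (Rfin : S → A → ℝ) (t : ℕ) (s : S) (a : A) : ℝ :=
  condExp μ0 p π (fun τ : Traj S A T => Rfin (tAt τ T).1 (tAt τ T).2)
    (fun τ => tAt τ t = (s, a))

/-- Expected future rewards `κ(m, tm1) = E_π[∑_{j=0}^{m} R_{tm1+1+j+1} ∣ s_{tm1}, a_{tm1}]`,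
i.e. `κ(m, t−1)` of the paper is `kappa μ0 p π R m (t−1)`. -/
noncomputable def kappa (μ0 : S → ℝ) (p : S → A → S → ℝ) (π : S → A → ℝ)
    (R : Traj S A T → ℕ → ℝ) (m tm1 : ℕ) (s : S) (a : A) : ℝ :=
  condExp μ0 p π (fun τ => ∑ j ∈ Finset.range (m + 1), R τ (tm1 + 1 + j))
    (fun τ => tAt τ tm1 = (s, a))

/-- The Q-function of the SDP: `q^π(s_t,a_t) = E_π[∑_{k=0}^{T−t} R_{t+k+1} ∣ s_t, a_t]`. -/
noncomputable def qval (μ0 : S → ℝ) (p : S → A → S → ℝ) (π : S → A → ℝ)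
    (R : Traj S A T → ℕ → ℝ) (t : ℕ) (s : S) (a : A) : ℝ :=
  condExp μ0 p π (fun τ => ∑ j ∈ Finset.range (T - t + 1), R τ (t + j))
    (fun τ => tAt τ t = (s, a))

/-- Expected immediate reward `r(s_t, a_t) = E_π[R_{t+1} ∣ s_t, a_t]`. -/
noncomputable def rexp (μ0 : S → ℝ) (p : S → A → S → ℝ) (π : S → A → ℝ)
    (R : Traj S A T → ℕ → ℝ) (t : ℕ) (s : S) (a : A) : ℝ :=
  condExp μ0 p π (fun τ => R τ t) (fun τ => tAt τ t = (s, a))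

/-- The event that the trajectory starts with the state-action prefix `σ 0, …, σ t`. -/
def prefixEv (σ : ℕ → S × A) (t : ℕ) (τ : Traj S A T) : Prop :=
  ∀ u ≤ t, tAt τ u = σ u


end RR

/-! Under the Markov dynamics, the conditional law of the future given any event determined by the
history up to time `t` and fixing `(s_t, a_t) = x` is that of the chain started at `x`. Hence
`q̃^π(s_t, a_t)` and the expectation of the final reward given the whole prefix
`(s_0, a_0, …, s_t, a_t)` are both the `(T - t)`-step expectation of the final reward from `x`.
By strict return-equivalence the final reward is `∑_{u ≤ t} R_{u+1}` plus the future rewards.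
Optimality and the independence-of-the-past condition make the expected future rewards given the
prefix vanish, and by causality `R_{u+1}` is constant on the shorter prefix
`(s_0, a_0, …, s_u, a_u)`, so its expectation given the prefix up to `t` is `h_u`. -/

namespace RR

open Finset

variable {S A : Type} {T : ℕ}

theorem tAt_val (τ : Traj S A T) (i : Fin (T + 1)) : tAt τ i = τ i := by
  simp [tAt, Nat.min_eq_left i.is_le]

theorem prefixEv_mono {σ : ℕ → S × A} {u t : ℕ} (hut : u ≤ t) {τ : Traj S A T}
    (h : prefixEv σ t τ) : prefixEv σ u τ :=
  fun v hv => h v (hv.trans hut)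

theorem prefixEv_horizon_iff (σ : ℕ → S × A) (τ : Traj S A T) :
    prefixEv σ T τ ↔ τ = fun i : Fin (T + 1) => σ i := by
  refine ⟨fun h => funext fun i => ?_, ?_⟩
  · rw [← tAt_val τ i, h i i.is_le]
  · rintro rfl u hu
    exact tAt_val _ ⟨u, Nat.lt_succ_of_le hu⟩

theorem prefixEv_update_succ_iff (σ : ℕ → S × A) (t : ℕ) (x : S × A) (τ : Traj S A T) :
    prefixEv (Function.update σ (t + 1) x) (t + 1) τ ↔ prefixEv σ t τ ∧ tAt τ (t + 1) = x := by
  refine ⟨fun h => ⟨fun u hu => ?_, ?_⟩, fun ⟨h, hx⟩ u hu => ?_⟩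
  · rw [h u (by omega), Function.update_of_ne (by omega)]
  · rw [h (t + 1) le_rfl, Function.update_self]
  · rcases Nat.of_le_succ hu with hu | rfl
    · rw [h u hu, Function.update_of_ne (by omega)]
    · rw [hx, Function.update_self]

theorem sum_eq_mul_sum_of_forall_fiber {ι κ M : Type*} [DecidableEq κ]
    [NonUnitalNonAssocSemiring M] (s : Finset ι) (F : ι → κ) (f w : ι → M) (c : M)
    (h : ∀ i ∈ s, ∑ j ∈ s with F j = F i, f j = c * ∑ j ∈ s with F j = F i, w j) :
    ∑ i ∈ s, f i = c * ∑ i ∈ s, w i := by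
  rw [← sum_fiberwise_of_maps_to (fun i hi => mem_image_of_mem F hi) f,
    ← sum_fiberwise_of_maps_to (fun i hi => mem_image_of_mem F hi) w, mul_sum]
  refine sum_congr rfl fun b hb => ?_
  obtain ⟨i, hi, rfl⟩ := mem_image.mp hb
  exact h i hi

section Markov

variable (μ0 : S → ℝ) (p : S → A → S → ℝ) (π : S → A → ℝ)

def stepProb (x y : S × A) : ℝ :=
  p x.1 x.2 y.1 * π y.1 y.2

def prefixProb (σ : ℕ → S × A) (t : ℕ) : ℝ :=
  μ0 (σ 0).1 * π (σ 0).1 (σ 0).2 * ∏ u ∈ range t, stepProb p π (σ u) (σ (u + 1))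

variable {μ0 p π}

theorem prefixProb_congr {σ σ' : ℕ → S × A} {t : ℕ} (h : ∀ u ≤ t, σ u = σ' u) :
    prefixProb μ0 p π σ t = prefixProb μ0 p π σ' t := by
  unfold prefixProb
  rw [h 0 t.zero_le, prod_congr rfl fun u hu => ?_]
  have hu := mem_range.mp hu
  rw [h u hu.le, h (u + 1) hu]

theorem prefixProb_succ (σ : ℕ → S × A) (t : ℕ) :
    prefixProb μ0 p π σ (t + 1) = prefixProb μ0 p π σ t * stepProb p π (σ t) (σ (t + 1)) := by
  simp only [prefixProb, prod_range_succ, mul_assoc]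

theorem prefixProb_update_succ (σ : ℕ → S × A) (t : ℕ) (x : S × A) :
    prefixProb μ0 p π (Function.update σ (t + 1) x) (t + 1) =
      prefixProb μ0 p π σ t * stepProb p π (σ t) x := by
  rw [prefixProb_succ, Function.update_self, Function.update_of_ne (by omega),
    prefixProb_congr fun u hu => Function.update_of_ne (show u ≠ t + 1 by omega) ..]

theorem trajProb_eq_prefixProb (τ : Traj S A T) :
    trajProb μ0 p π τ = prefixProb μ0 p π (tAt τ) T := by
  have hstep (i : Fin T) : tAt τ i = τ i.castSucc ∧ tAt τ (i + 1) = τ i.succ :=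
    ⟨tAt_val τ i.castSucc, tAt_val τ i.succ⟩
  rw [trajProb, prefixProb,
    ← Fin.prod_univ_eq_prod_range (fun u => stepProb p π (tAt τ u) (tAt τ (u + 1))),
    ← Fin.val_zero (T + 1), tAt_val]
  simp only [hstep]
  rfl

variable [Fintype S] [Fintype A]

variable (p π) in
noncomputable def expectedAfter (g : S × A → ℝ) : ℕ → S × A → ℝ
  | 0 => g
  | k + 1 => fun x => ∑ y, stepProb p π x y * expectedAfter g k y

theorem sum_stepProb (hp : IsKernel p) (hπ : IsPolicy π) (x : S × A) :
    ∑ y, stepProb p π x y = 1 := by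
  simp only [stepProb, Fintype.sum_prod_type, ← mul_sum, hπ.2, mul_one, hp.2]

theorem expectedAfter_one (hp : IsKernel p) (hπ : IsPolicy π) :
    ∀ k x, expectedAfter p π (fun _ => 1) k x = 1
  | 0, _ => rfl
  | k + 1, x => by
    simp only [expectedAfter, expectedAfter_one hp hπ k, mul_one, sum_stepProb hp hπ]

open scoped Classical in
theorem sum_prefixEv_mul_final (g : S × A → ℝ) {k t : ℕ} (htk : t + k = T)
    (σ : ℕ → S × A) :
    ∑ τ ∈ univ.filter (prefixEv (T := T) σ t), trajProb μ0 p π τ * g (tAt τ T) =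
      prefixProb μ0 p π σ t * expectedAfter p π g k (σ t) := by
  induction k generalizing t σ with
  | zero =>
    obtain rfl : t = T := htk
    have hsingle : univ.filter (prefixEv (T := t) σ t) = {fun i : Fin (t + 1) => σ i} := by
      ext τ
      simp [prefixEv_horizon_iff]
    rw [hsingle, sum_singleton, trajProb_eq_prefixProb,
      prefixProb_congr fun u hu => tAt_val (fun i : Fin (t + 1) => σ i) ⟨u, Nat.lt_succ_of_le hu⟩]
    simp [tAt, expectedAfter]
  | succ k ih =>
    calc ∑ τ ∈ univ.filter (prefixEv σ t), trajProb μ0 p π τ * g (tAt τ T)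
        = ∑ x, ∑ τ ∈ (univ.filter (prefixEv σ t)).filter (fun τ => tAt τ (t + 1) = x),
            trajProb μ0 p π τ * g (tAt τ T) := (sum_fiberwise _ _ _).symm
      _ = ∑ x, prefixProb μ0 p π (Function.update σ (t + 1) x) (t + 1) *
            expectedAfter p π g k x := by
        refine sum_congr rfl fun x _ => ?_
        simp_rw [filter_filter, ← prefixEv_update_succ_iff]
        rw [ih (by omega), Function.update_self]
      _ = prefixProb μ0 p π σ t * expectedAfter p π g (k + 1) (σ t) := by
        simp_rw [prefixProb_update_succ, expectedAfter, mul_sum, mul_assoc]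

open scoped Classical in
theorem sum_prefixEv_trajProb (hp : IsKernel p) (hπ : IsPolicy π) {t : ℕ} (ht : t ≤ T)
    (σ : ℕ → S × A) :
    ∑ τ ∈ univ.filter (prefixEv (T := T) σ t), trajProb μ0 p π τ = prefixProb μ0 p π σ t := by
  simpa [expectedAfter_one hp hπ] using
    sum_prefixEv_mul_final (μ0 := μ0) (p := p) (π := π) (fun _ => 1) (k := T - t) (by omega) σ

open scoped Classical in
theorem sum_filter_mul_final_of_determined (hp : IsKernel p) (hπ : IsPolicy π) (g : S × A → ℝ)
    {E : Traj S A T → Prop} {t : ℕ} {x : S × A} (ht : t ≤ T)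
    (hE : ∀ τ τ', (∀ u ≤ t, tAt τ u = tAt τ' u) → E τ → E τ') (hx : ∀ τ, E τ → tAt τ t = x) :
    ∑ τ ∈ univ.filter E, trajProb μ0 p π τ * g (tAt τ T) =
      expectedAfter p π g (T - t) x * probOf μ0 p π E := by
  refine sum_eq_mul_sum_of_forall_fiber _ (fun τ (i : Fin (t + 1)) => tAt τ i) _ _ _
    fun τ₀ hτ₀ => ?_
  have hfiber : (univ.filter E).filter (fun τ => (fun i : Fin (t + 1) => tAt τ i) =
      fun i : Fin (t + 1) => tAt τ₀ i) = univ.filter (prefixEv (tAt τ₀) t) := by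
    ext τ
    simp only [mem_filter, mem_univ, true_and, funext_iff] at hτ₀ ⊢
    refine ⟨fun h u hu => h.2 ⟨u, Nat.lt_succ_of_le hu⟩, fun h => ⟨?_, fun i => h i i.is_le⟩⟩
    exact hE τ₀ τ (fun u hu => (h u hu).symm) hτ₀
  rw [hfiber, sum_prefixEv_mul_final g (k := T - t) (by omega), sum_prefixEv_trajProb hp hπ ht,
    hx τ₀ (mem_filter.mp hτ₀).2, mul_comm]

end Markov

section CondExp

variable [Fintype S] [Fintype A] {μ0 : S → ℝ} {p : S → A → S → ℝ} {π : S → A → ℝ}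

theorem trajProb_nonneg (hμ0 : IsInit μ0) (hp : IsKernel p) (hπ : IsPolicy π)
    (τ : Traj S A T) : 0 ≤ trajProb μ0 p π τ :=
  mul_nonneg (mul_nonneg (hμ0.1 _) (hπ.1 _ _))
    (prod_nonneg fun _ _ => mul_nonneg (hp.1 _ _ _) (hπ.1 _ _))

theorem probOf_mono (hμ0 : IsInit μ0) (hp : IsKernel p) (hπ : IsPolicy π)
    {E E' : Traj S A T → Prop} (h : ∀ τ, E τ → E' τ) :
    probOf μ0 p π E ≤ probOf μ0 p π E' := by
  classical
  exact sum_le_sum_of_subset_of_nonneg (monotone_filter_right _ fun τ _ => h τ)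
    fun τ _ _ => trajProb_nonneg hμ0 hp hπ τ

theorem probOf_ne_zero_of_imp (hμ0 : IsInit μ0) (hp : IsKernel p) (hπ : IsPolicy π)
    {E E' : Traj S A T → Prop} (h : ∀ τ, E τ → E' τ) (hE : probOf μ0 p π E ≠ 0) :
    probOf μ0 p π E' ≠ 0 :=
  (((sum_nonneg fun τ _ => trajProb_nonneg hμ0 hp hπ τ).lt_of_ne' hE).trans_le
    (probOf_mono hμ0 hp hπ h)).ne'

theorem exists_of_probOf_ne_zero {E : Traj S A T → Prop} (hE : probOf μ0 p π E ≠ 0) :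
    ∃ τ, E τ := by
  classical
  obtain ⟨τ, hτ, -⟩ := exists_ne_zero_of_sum_ne_zero hE
  exact ⟨τ, (mem_filter.mp hτ).2⟩

open scoped Classical in
theorem condExp_eq_of_sum_eq {f : Traj S A T → ℝ} {E : Traj S A T → Prop} {c : ℝ}
    (h : ∑ τ ∈ univ.filter E, trajProb μ0 p π τ * f τ = c * probOf μ0 p π E)
    (hE : probOf μ0 p π E ≠ 0) : condExp μ0 p π f E = c := by
  rw [condExp, h, mul_div_cancel_right₀ _ hE]

theorem condExp_eq_of_forall_eq {f : Traj S A T → ℝ} {E : Traj S A T → Prop} {c : ℝ}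
    (h : ∀ τ, E τ → f τ = c) (hE : probOf μ0 p π E ≠ 0) : condExp μ0 p π f E = c := by
  classical
  refine condExp_eq_of_sum_eq ?_ hE
  rw [probOf, mul_sum]
  exact sum_congr rfl fun τ hτ => by rw [h τ (mem_filter.mp hτ).2, mul_comm]

theorem condExp_congr {f f' : Traj S A T → ℝ} {E : Traj S A T → Prop}
    (h : ∀ τ, E τ → f τ = f' τ) : condExp μ0 p π f E = condExp μ0 p π f' E := by
  classical
  unfold condExp
  congr 1
  exact sum_congr rfl fun τ hτ => by rw [h τ (mem_filter.mp hτ).2]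

theorem condExp_add (f f' : Traj S A T → ℝ) (E : Traj S A T → Prop) :
    condExp μ0 p π (fun τ => f τ + f' τ) E = condExp μ0 p π f E + condExp μ0 p π f' E := by
  simp only [condExp, mul_add, sum_add_distrib, add_div]

theorem condExp_sum {ι : Type*} (s : Finset ι) (f : ι → Traj S A T → ℝ)
    (E : Traj S A T → Prop) :
    condExp μ0 p π (fun τ => ∑ i ∈ s, f i τ) E = ∑ i ∈ s, condExp μ0 p π (f i) E := by
  simp only [condExp, mul_sum, ← sum_div]
  rw [sum_comm]

theorem condExp_final_of_determined (hp : IsKernel p) (hπ : IsPolicy π) (g : S × A → ℝ)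
    {E : Traj S A T → Prop} {t : ℕ} {x : S × A} (ht : t ≤ T)
    (hE : ∀ τ τ', (∀ u ≤ t, tAt τ u = tAt τ' u) → E τ → E τ') (hx : ∀ τ, E τ → tAt τ t = x)
    (hE₀ : probOf μ0 p π E ≠ 0) :
    condExp μ0 p π (fun τ => g (tAt τ T)) E = expectedAfter p π g (T - t) x :=
  condExp_eq_of_sum_eq (sum_filter_mul_final_of_determined hp hπ g ht hE hx) hE₀

theorem condExp_prefixEv_of_causal (hμ0 : IsInit μ0) (hp : IsKernel p) (hπ : IsPolicy π)
    {R : Traj S A T → ℕ → ℝ} (hR : Causal R) {σ : ℕ → S × A} {u t : ℕ} (hut : u ≤ t)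
    (ht : t ≤ T) (hσ : probOf μ0 p π (prefixEv (T := T) σ t) ≠ 0) :
    condExp μ0 p π (fun τ => R τ u) (prefixEv σ t) =
      condExp μ0 p π (fun τ => R τ u) (prefixEv σ u) := by
  obtain ⟨τ₀, hτ₀⟩ := exists_of_probOf_ne_zero hσ
  have hconst (τ) (hτ : prefixEv σ u τ) : R τ u = R τ₀ u :=
    hR u (hut.trans ht) τ τ₀ fun v hv => (hτ v hv).trans (hτ₀ v (hv.trans hut)).symm
  rw [condExp_eq_of_forall_eq (fun τ hτ => hconst τ (prefixEv_mono hut hτ)) hσ,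
    condExp_eq_of_forall_eq hconst
      (probOf_ne_zero_of_imp hμ0 hp hπ (fun _ => prefixEv_mono hut) hσ)]

end CondExp

theorem ret_delayedR (Rfin : S → A → ℝ) (τ : Traj S A T) :
    ret (delayedR Rfin) τ = Rfin (tAt τ T).1 (tAt τ T).2 := by
  simp [ret, delayedR]

theorem stmt12_q_decomposition_general
    (S A : Type) [Fintype S] [Fintype A]
    (T : ℕ) (μ0 : S → ℝ) (p : S → A → S → ℝ)
    (hμ0 : IsInit μ0) (hp : IsKernel p)
    (Rfin : S → A → ℝ) (R : Traj S A T → ℕ → ℝ)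
    (hcausal : Causal R)
    (hsre : ∀ τ : Traj S A T, ret (delayedR (T := T) Rfin) τ = ret R τ)
    (π : S → A → ℝ) (hπ : IsPolicy π)
    (hopt : ∀ t : ℕ, t ≤ T - 1 → ∀ (s : S) (a : A),
      kappa μ0 p π R (T - t - 1) t s a = 0)
    (hcond : ∀ t : ℕ, t ≤ T → ∀ σ : ℕ → S × A,
      probOf μ0 p π (prefixEv (T := T) σ t) ≠ 0 →
      condExp μ0 p π (fun τ => ∑ j ∈ Finset.range (T - t), R τ (t + 1 + j))
          (fun τ : Traj S A T => tAt τ t = σ t) =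
        condExp μ0 p π (fun τ => ∑ j ∈ Finset.range (T - t), R τ (t + 1 + j))
          (prefixEv (T := T) σ t)) :
    ∀ t : ℕ, t ≤ T → ∀ σ : ℕ → S × A,
      probOf μ0 p π (prefixEv (T := T) σ t) ≠ 0 →
      qtil T μ0 p π Rfin t (σ t).1 (σ t).2 =
        ∑ u ∈ Finset.range (t + 1),
          condExp μ0 p π (fun τ => R τ u) (prefixEv (T := T) σ u) := by
  intro t ht σ hσ
  have hstate : probOf μ0 p π (fun τ : Traj S A T => tAt τ t = σ t) ≠ 0 :=
    probOf_ne_zero_of_imp hμ0 hp hπ (fun τ h => h t le_rfl) hσ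
  have hreturn (τ : Traj S A T) : Rfin (tAt τ T).1 (tAt τ T).2 =
      ∑ u ∈ range (t + 1), R τ u + ∑ j ∈ range (T - t), R τ (t + 1 + j) := by
    rw [← ret_delayedR Rfin τ, hsre, ret, ← sum_range_add, show t + 1 + (T - t) = T + 1 by omega]
  have hfuture : condExp μ0 p π (fun τ => ∑ j ∈ range (T - t), R τ (t + 1 + j))
      (prefixEv σ t) = 0 := by
    rw [← hcond t ht σ hσ]
    rcases ht.lt_or_eq with hlt | rfl
    · simpa [kappa, show T - t - 1 + 1 = T - t by omega] using hopt t (by omega) (σ t).1 (σ t).2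
    · simp [condExp]
  let g : S × A → ℝ := fun x => Rfin x.1 x.2
  calc qtil T μ0 p π Rfin t (σ t).1 (σ t).2
      = expectedAfter p π g (T - t) (σ t) :=
        condExp_final_of_determined hp hπ g ht (fun τ τ' h hτ => (h t le_rfl).symm.trans hτ)
          (fun _ => id) hstate
    _ = condExp μ0 p π (fun τ => g (tAt τ T)) (prefixEv σ t) :=
        (condExp_final_of_determined hp hπ g ht
          (fun τ τ' h hτ u hu => (h u hu).symm.trans (hτ u hu)) (fun τ hτ => hτ t le_rfl) hσ).symm
    _ = ∑ u ∈ range (t + 1), condExp μ0 p π (fun τ => R τ u) (prefixEv σ t) := by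
        rw [condExp_congr fun τ _ => hreturn τ, condExp_add, hfuture, add_zero, condExp_sum]
    _ = ∑ u ∈ range (t + 1), condExp μ0 p π (fun τ => R τ u) (prefixEv σ u) :=
        sum_congr rfl fun u hu => condExp_prefixEv_of_causal hμ0 hp hπ hcausal
          (mem_range_succ_iff.mp hu) ht hσ

/-- For a strictly return-equivalent optimal higher-order Markov reward
redistribution satisfying the independence-of-the-past condition, the Q-function of the
delayed-reward MDP decomposes as the sum of the expected redistributed rewards:
`q̃^π(s_t,a_t) = ∑_{τ=0}^{t} h_τ`. -/
theorem stmt12_q_decomposition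
    (S A : Type) [Fintype S] [Fintype A] [DecidableEq S] [DecidableEq A]
    (T : ℕ) (μ0 : S → ℝ) (p : S → A → S → ℝ)
    (hμ0 : IsInit μ0) (hp : IsKernel p)
    (Rfin : S → A → ℝ) (R : Traj S A T → ℕ → ℝ)
    (hcausal : Causal R)
    (hsre : ∀ τ : Traj S A T, ret (delayedR (T := T) Rfin) τ = ret R τ)
    (π : S → A → ℝ) (hπ : IsPolicy π)
    (hopt : ∀ t : ℕ, t ≤ T - 1 → ∀ (s : S) (a : A),
      kappa μ0 p π R (T - t - 1) t s a = 0)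
    (hcond : ∀ t : ℕ, t ≤ T → ∀ σ : ℕ → S × A,
      probOf μ0 p π (prefixEv (T := T) σ t) ≠ 0 →
      condExp μ0 p π (fun τ => ∑ j ∈ Finset.range (T - t), R τ (t + 1 + j))
          (fun τ : Traj S A T => tAt τ t = σ t) =
        condExp μ0 p π (fun τ => ∑ j ∈ Finset.range (T - t), R τ (t + 1 + j))
          (prefixEv (T := T) σ t)) :
    ∀ t : ℕ, t ≤ T → ∀ σ : ℕ → S × A,
      probOf μ0 p π (prefixEv (T := T) σ t) ≠ 0 →
      qtil T μ0 p π Rfin t (σ t).1 (σ t).2 =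
        ∑ u ∈ Finset.range (t + 1),
          condExp μ0 p π (fun τ => R τ u) (prefixEv (T := T) σ u) :=
  stmt12_q_decomposition_general S A T μ0 p hμ0 hp Rfin R hcausal hsre π hπ hopt hcond

end RR
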